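/- The asymptotic reachable set depends continuously on the control set in the Hausdorff metric: if (R_m)_{m≥1} and R are nonempty compact subsets of [0,1] with d_H(R_m, R) → 0 as m → ∞, then d_H( R_∞(ρ, ω, R_m), R_∞(ρ, ω, R) ) → 0 as m → ∞, where R_∞(ρ, ω, Q) denotes the asymptotic reachable set built from the control set Q. -/

import Mathlib

/-- The reachable set in time `k` built from the control set `Q`:
`R_k(ρ,ω,Q) = { Σ_{j=1}^{k} ρ^{-j} e^{-iω Σ_{n=0}^{j} v_n} : v_1, …, v_k ∈ Q }`, with
`v_0` the fixed initial orientation (so `R_0 = {0}`). -/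
noncomputable def reachSet (ρ ω v₀ : ℝ) (Q : Set ℝ) (k : ℕ) : Set ℂ :=
  { x | ∃ v : ℕ → ℝ, v 0 = v₀ ∧ (∀ n, 1 ≤ n → n ≤ k → v n ∈ Q) ∧
    x = ∑ j ∈ Finset.Icc 1 k, (1 / (ρ : ℂ) ^ j) *
      Complex.exp (-((ω * ∑ n ∈ Finset.range (j + 1), v n : ℝ) : ℂ) * Complex.I) }

/-- The asymptotic reachable set `R_∞(ρ,ω,Q) = closure(⋃_{k=0}^∞ R_k(ρ,ω,Q))`. -/
noncomputable def asymptReachSet (ρ ω v₀ : ℝ) (Q : Set ℝ) : Set ℂ :=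
  closure (⋃ k : ℕ, reachSet ρ ω v₀ Q k)

/-!
Replacing each control `v_n` by a control of `Q'` within distance `r` turns the angle
`ω Σ_{n ≤ j} v_n` by at most `|ω| j r` (the initial orientation is shared), and `t ↦ e^{it}` is
1-Lipschitz, so the `j`-th term moves by at most `ρ^{-j} |ω| j r`. Summing,
`Σ_j j ρ^{-j} = ρ / (ρ - 1)²`, so `Q ↦ R_∞(ρ, ω, Q)` is Lipschitz for the Hausdorff distance
with constant `|ω| ρ / (ρ - 1)²`.
-/

open Complex Metric Finset Filter Topology

noncomputable def reachPoint (ρ ω : ℝ) (v : ℕ → ℝ) (k : ℕ) : ℂ :=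
  ∑ j ∈ Icc 1 k, (1 / (ρ : ℂ) ^ j) * exp (-((ω * ∑ n ∈ range (j + 1), v n : ℝ) : ℂ) * I)

theorem mem_reachSet_iff {ρ ω v₀ : ℝ} {Q : Set ℝ} {k : ℕ} {x : ℂ} :
    x ∈ reachSet ρ ω v₀ Q k ↔
      ∃ v : ℕ → ℝ, v 0 = v₀ ∧ (∀ n, 1 ≤ n → n ≤ k → v n ∈ Q) ∧ x = reachPoint ρ ω v k :=
  Iff.rfl

theorem lipschitzWith_exp_ofReal_mul_I : LipschitzWith 1 fun t : ℝ => exp (t * I) :=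
  LipschitzWith.of_dist_le_mul fun a b => by
    have h : exp (a * I) - exp (b * I) = exp (b * I) * (exp (I * ↑(a - b)) - 1) := by
      rw [mul_sub, mul_one, ← Complex.exp_add]; push_cast; ring_nf
    rw [NNReal.coe_one, one_mul, dist_eq_norm, h, norm_mul, norm_exp_ofReal_mul_I, one_mul]
    exact Real.norm_exp_I_mul_ofReal_sub_one_le

theorem abs_sum_range_sub_sum_range_le {v w : ℕ → ℝ} {j : ℕ} {r : ℝ} (h0 : v 0 = w 0)
    (hvw : ∀ n, 1 ≤ n → n ≤ j → |v n - w n| ≤ r) :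
    |∑ n ∈ range (j + 1), v n - ∑ n ∈ range (j + 1), w n| ≤ j * r := by
  rw [sum_range_succ', sum_range_succ', h0, add_sub_add_right_eq_sub, ← sum_sub_distrib]
  calc |∑ n ∈ range j, (v (n + 1) - w (n + 1))|
      ≤ ∑ n ∈ range j, |v (n + 1) - w (n + 1)| := abs_sum_le_sum_abs _ _
    _ ≤ ∑ _n ∈ range j, r :=
        sum_le_sum fun n hn => hvw (n + 1) (by omega) (by simp at hn; omega)
    _ = j * r := by simp

theorem dist_reachPoint_le (ρ ω : ℝ) {v w : ℕ → ℝ} {k : ℕ} {r : ℝ} (h0 : v 0 = w 0)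
    (hvw : ∀ n, 1 ≤ n → n ≤ k → |v n - w n| ≤ r) :
    dist (reachPoint ρ ω v k) (reachPoint ρ ω w k)
      ≤ |ω| * r * ∑ j ∈ Icc 1 k, j * |ρ|⁻¹ ^ j := by
  rw [dist_eq_norm, reachPoint, reachPoint, ← sum_sub_distrib, mul_sum]
  refine (norm_sum_le _ _).trans (sum_le_sum fun j hj => ?_)
  have hjk : j ≤ k := (mem_Icc.mp hj).2
  have hangle : dist (exp (-((ω * ∑ n ∈ range (j + 1), v n : ℝ) : ℂ) * I))
      (exp (-((ω * ∑ n ∈ range (j + 1), w n : ℝ) : ℂ) * I)) ≤ |ω| * (j * r) := by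
    rw [← ofReal_neg, ← ofReal_neg]
    refine (lipschitzWith_exp_ofReal_mul_I.dist_le_mul_of_le (r := |ω| * (j * r)) ?_).trans_eq
      (one_mul _)
    rw [Real.dist_eq, ← neg_sub', abs_neg, ← mul_sub, abs_mul]
    exact mul_le_mul_of_nonneg_left
      (abs_sum_range_sub_sum_range_le h0 fun n h1 h2 => hvw n h1 (h2.trans hjk)) (abs_nonneg ω)
  calc ‖1 / (ρ : ℂ) ^ j * exp (-((ω * ∑ n ∈ range (j + 1), v n : ℝ) : ℂ) * I)
        - 1 / (ρ : ℂ) ^ j * exp (-((ω * ∑ n ∈ range (j + 1), w n : ℝ) : ℂ) * I)‖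
      = |ρ|⁻¹ ^ j * dist (exp (-((ω * ∑ n ∈ range (j + 1), v n : ℝ) : ℂ) * I))
          (exp (-((ω * ∑ n ∈ range (j + 1), w n : ℝ) : ℂ) * I)) := by
        rw [← mul_sub, norm_mul, dist_eq_norm]; simp
    _ ≤ |ρ|⁻¹ ^ j * (|ω| * (j * r)) := by gcongr
    _ = |ω| * r * (j * |ρ|⁻¹ ^ j) := by ring

theorem sum_Icc_mul_inv_pow_le {ρ : ℝ} (hρ : 1 < ρ) (k : ℕ) :
    ∑ j ∈ Icc 1 k, j * ρ⁻¹ ^ j ≤ ρ / (ρ - 1) ^ 2 := by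
  have hsum : HasSum (fun j : ℕ => j * ρ⁻¹ ^ j) (ρ / (ρ - 1) ^ 2) := by
    have hr : ‖ρ⁻¹‖ < 1 := by
      rw [norm_inv, Real.norm_of_nonneg (by linarith)]; exact inv_lt_one_of_one_lt₀ hρ
    have key := hasSum_coe_mul_geometric_of_norm_lt_one hr
    rwa [show ρ⁻¹ / (1 - ρ⁻¹) ^ 2 = ρ / (ρ - 1) ^ 2 by field_simp] at key
  exact sum_le_hasSum _ (fun j _ => by positivity) hsum

theorem exists_mem_reachSet_dist_le {ρ : ℝ} (hρ : 1 < ρ) (ω v₀ : ℝ) {Q Q' : Set ℝ} {r : ℝ}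
    (hfin : hausdorffEDist Q Q' ≠ ⊤) (hr : hausdorffDist Q Q' < r) {k : ℕ} {x : ℂ}
    (hx : x ∈ reachSet ρ ω v₀ Q k) :
    ∃ y ∈ reachSet ρ ω v₀ Q' k, dist x y ≤ |ω| * ρ / (ρ - 1) ^ 2 * r := by
  obtain ⟨v, rfl, hvQ, rfl⟩ := mem_reachSet_iff.mp hx
  have hcontrol : ∀ n, ∃ y, (n = 0 → y = v 0) ∧ (1 ≤ n → n ≤ k → y ∈ Q' ∧ |v n - y| ≤ r) := by
    intro n
    by_cases hn : 1 ≤ n ∧ n ≤ k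
    · obtain ⟨y, hy, hdist⟩ := exists_dist_lt_of_hausdorffDist_lt (hvQ n hn.1 hn.2) hr hfin
      exact ⟨y, by omega, fun _ _ => ⟨hy, hdist.le⟩⟩
    · exact ⟨v 0, fun _ => rfl, fun h1 h2 => absurd ⟨h1, h2⟩ hn⟩
  choose w hw0 hw using hcontrol
  have hr0 : 0 ≤ r := hausdorffDist_nonneg.trans hr.le
  refine ⟨reachPoint ρ ω w k,
    mem_reachSet_iff.mpr ⟨w, hw0 0 rfl, fun n h1 h2 => (hw n h1 h2).1, rfl⟩, ?_⟩
  calc dist (reachPoint ρ ω v k) (reachPoint ρ ω w k)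
      ≤ |ω| * r * ∑ j ∈ Icc 1 k, j * |ρ|⁻¹ ^ j :=
        dist_reachPoint_le ρ ω (hw0 0 rfl).symm fun n h1 h2 => (hw n h1 h2).2
    _ ≤ |ω| * r * (ρ / (ρ - 1) ^ 2) := by
        rw [abs_of_pos (by linarith : 0 < ρ)]
        gcongr
        exact sum_Icc_mul_inv_pow_le hρ k
    _ = |ω| * ρ / (ρ - 1) ^ 2 * r := by ring

theorem hausdorffDist_asymptReachSet_le {ρ : ℝ} (hρ : 1 < ρ) (ω v₀ : ℝ) {Q Q' : Set ℝ}
    (hfin : hausdorffEDist Q Q' ≠ ⊤) :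
    hausdorffDist (asymptReachSet ρ ω v₀ Q) (asymptReachSet ρ ω v₀ Q')
      ≤ |ω| * ρ / (ρ - 1) ^ 2 * hausdorffDist Q Q' := by
  set C := |ω| * ρ / (ρ - 1) ^ 2
  set d := hausdorffDist Q Q'
  have approx : ∀ {P P' : Set ℝ} {r : ℝ}, hausdorffEDist P P' ≠ ⊤ → hausdorffDist P P' < r →
      ∀ x ∈ ⋃ k, reachSet ρ ω v₀ P k, ∃ y ∈ ⋃ k, reachSet ρ ω v₀ P' k, dist x y ≤ C * r := by
    intro P P' r hfin hr x hx
    obtain ⟨k, hxk⟩ := Set.mem_iUnion.mp hx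
    obtain ⟨y, hy, hxy⟩ := exists_mem_reachSet_dist_le hρ ω v₀ hfin hr hxk
    exact ⟨y, Set.mem_iUnion.mpr ⟨k, hy⟩, hxy⟩
  rw [asymptReachSet, asymptReachSet, hausdorffDist_closure]
  -- `d` need not be attained: bound by `C r` for every `r > d`, then let `r` decrease to `d`.
  have hlim : Tendsto (fun r => C * r) (𝓝[>] d) (𝓝 (C * d)) :=
    ((continuous_const.mul continuous_id).tendsto d).mono_left nhdsWithin_le_nhds
  refine ge_of_tendsto hlim ?_
  filter_upwards [self_mem_nhdsWithin] with r hr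
  refine hausdorffDist_le_of_mem_dist
    (mul_nonneg (by positivity) (hausdorffDist_nonneg.trans hr.out.le))
    (approx hfin hr) fun x hx => ?_
  obtain ⟨y, hy, hxy⟩ := approx (by rwa [hausdorffEDist_comm]) (by rwa [hausdorffDist_comm]) x hx
  exact ⟨y, hy, dist_comm x y ▸ hxy⟩

theorem asymptReachSet_continuous_in_controls_general (ρ ω v₀ : ℝ) (hρ : 1 < ρ)
    (Rm : ℕ → Set ℝ)
    (hRmne : ∀ m, (Rm m).Nonempty) (hRmc : ∀ m, IsCompact (Rm m))
    (R : Set ℝ) (hRne : R.Nonempty) (hRc : IsCompact R)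
    (hconv : Filter.Tendsto (fun m => Metric.hausdorffDist (Rm m) R)
      Filter.atTop (nhds 0)) :
    Filter.Tendsto
      (fun m => Metric.hausdorffDist (asymptReachSet ρ ω v₀ (Rm m))
        (asymptReachSet ρ ω v₀ R))
      Filter.atTop (nhds 0) := by
  have hfin : ∀ m, hausdorffEDist (Rm m) R ≠ ⊤ := fun m =>
    hausdorffEDist_ne_top_of_nonempty_of_bounded (hRmne m) hRne (hRmc m).isBounded hRc.isBounded
  refine squeeze_zero (fun m => hausdorffDist_nonneg)
    (fun m => hausdorffDist_asymptReachSet_le hρ ω v₀ (hfin m)) ?_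
  simpa using hconv.const_mul (|ω| * ρ / (ρ - 1) ^ 2)

/-- The asymptotic reachable set depends continuously on the control set in the
Hausdorff metric: if `(R_m)` and `R` are nonempty compact subsets of `[0,1]` with
`d_H(R_m, R) → 0`, then `d_H(R_∞(ρ,ω,R_m), R_∞(ρ,ω,R)) → 0`. -/
theorem asymptReachSet_continuous_in_controls (ρ ω v₀ : ℝ) (hρ : 1 < ρ)
    (Rm : ℕ → Set ℝ) (hRm : ∀ m, Rm m ⊆ Set.Icc 0 1)
    (hRmne : ∀ m, (Rm m).Nonempty) (hRmc : ∀ m, IsCompact (Rm m))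
    (R : Set ℝ) (hR : R ⊆ Set.Icc 0 1) (hRne : R.Nonempty) (hRc : IsCompact R)
    (hconv : Filter.Tendsto (fun m => Metric.hausdorffDist (Rm m) R)
      Filter.atTop (nhds 0)) :
    Filter.Tendsto
      (fun m => Metric.hausdorffDist (asymptReachSet ρ ω v₀ (Rm m))
        (asymptReachSet ρ ω v₀ R))
      Filter.atTop (nhds 0) :=
  asymptReachSet_continuous_in_controls_general ρ ω v₀ hρ Rm hRmne hRmc R hRne hRc hconv
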